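/- arXiv:2408.09591 — 2 statements merged into one kernel-verified Lean document; each statement's English description precedes it below -/
import Mathlib

section
/- Let k be a positive integer, α and β finite types, G a simple graph on α with labeling lab_G : α → Fin k, H a simple graph on β with labeling lab_H : β → Fin k, and M ⊆ Fin k × Fin k. Let F be the M-product of (G, lab_G) and (H, lab_H), labeled by lab_G on inl-vertices and lab_H on inr-vertices. Then for every I ⊆ Fin k, the set of cardinalities {|T| : T is a vertex cover of F with full_F(T) = I} equals the set {|T_G| + |T_H| : (I_G, I_H) is a split of I with respect to M, T_G is a vertex cover of G with full_G(T_G) = I_G, and T_H is a vertex cover of H with full_H(T_H) = I_H}. In particular, the minimum cardinality of a vertex cover of F with full set I (when one exists) equals the minimum over splits (I_G, I_H) of I with respect to M of the sum of the minimum cardinalities of vertex covers of G and H with full sets I_G and I_H respectively. -/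
/-- A vertex cover of a simple graph: a set of vertices containing at least one
endpoint of every edge. -/
def IsVertexCover {V : Type*} (G : SimpleGraph V) (C : Finset V) : Prop :=
  ∀ ⦃u v : V⦄, G.Adj u v → u ∈ C ∨ v ∈ C

/-- The `M`-product of the `k`-labeled graphs `(G, labG)` and `(H, labH)`: the graph on
`α ⊕ β` in which `inl u, inl v` are adjacent iff `u, v` are adjacent in `G`,
`inr u, inr v` are adjacent iff `u, v` are adjacent in `H`, and `inl u, inr v` are
adjacent iff `(labG u, labH v) ∈ M`. -/
def MProduct {k : ℕ} {α β : Type*} (G : SimpleGraph α) (H : SimpleGraph β)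
    (labG : α → Fin k) (labH : β → Fin k) (M : Set (Fin k × Fin k)) :
    SimpleGraph (α ⊕ β) where
  Adj x y :=
    match x, y with
    | Sum.inl u, Sum.inl v => G.Adj u v
    | Sum.inr u, Sum.inr v => H.Adj u v
    | Sum.inl u, Sum.inr v => (labG u, labH v) ∈ M
    | Sum.inr u, Sum.inl v => (labG v, labH u) ∈ M
  symm := ⟨by
    rintro (u | u) (v | v) h
    · exact G.adj_symm h
    · exact h
    · exact h
    · exact H.adj_symm h⟩
  loopless := ⟨by
    rintro (u | u) h
    · exact G.irrefl h
    · exact H.irrefl h⟩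

/-- The left part `T_G = {a : inl a ∈ T}` of a set of vertices of a sum type. -/
def leftPart {α β : Type*} [Fintype α] [DecidableEq α] [DecidableEq β]
    (T : Finset (α ⊕ β)) : Finset α :=
  Finset.univ.filter (fun a => Sum.inl a ∈ T)

/-- The right part `T_H = {b : inr b ∈ T}` of a set of vertices of a sum type. -/
def rightPart {α β : Type*} [Fintype β] [DecidableEq α] [DecidableEq β]
    (T : Finset (α ⊕ β)) : Finset β :=
  Finset.univ.filter (fun b => Sum.inr b ∈ T)

/-- The preimage `lab⁻¹(i)` of a label `i` under a labeling. -/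
def labelClass {k : ℕ} {γ : Type*} [Fintype γ] (lab : γ → Fin k) (i : Fin k) :
    Finset γ :=
  Finset.univ.filter (fun v => lab v = i)

/-- `full(X) = {i : lab⁻¹(i) ⊆ X}` for a `k`-labeled graph with labeling `lab`. -/
def fullSet {k : ℕ} {γ : Type*} [Fintype γ] [DecidableEq γ] (lab : γ → Fin k)
    (X : Finset γ) : Finset (Fin k) :=
  Finset.univ.filter (fun i => labelClass lab i ⊆ X)

/-- `(IG, IH)` is a split of `I` with respect to `M` if `IG ∩ IH = I` and for every
`(i, j) ∈ M`, `i ∈ IG` or `j ∈ IH`. -/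
def IsSplit {k : ℕ} (I IG IH : Finset (Fin k)) (M : Set (Fin k × Fin k)) : Prop :=
  IG ∩ IH = I ∧ ∀ p ∈ M, p.1 ∈ IG ∨ p.2 ∈ IH

/-- For the `M`-product `F` of `(G, labG)` and `(H, labH)`, labeled by
`Sum.elim labG labH`, and every `I ⊆ Fin k`: the set of cardinalities of vertex covers
of `F` whose full set is `I` equals the set of sums `|T_G| + |T_H|` over splits
`(IG, IH)` of `I` with respect to `M` and vertex covers `T_G` of `G` and `T_H` of `H`
with full sets `IG` and `IH` respectively. -/
theorem stmt15 (k : ℕ) (hk : 0 < k) {α β : Type*}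
    [Fintype α] [Fintype β] [DecidableEq α] [DecidableEq β]
    (G : SimpleGraph α) (H : SimpleGraph β)
    (labG : α → Fin k) (labH : β → Fin k) (M : Set (Fin k × Fin k))
    (I : Finset (Fin k)) :
    {n : ℕ | ∃ T : Finset (α ⊕ β),
        IsVertexCover (MProduct G H labG labH M) T ∧
          fullSet (Sum.elim labG labH) T = I ∧ T.card = n} =
    {n : ℕ | ∃ (IG IH : Finset (Fin k)) (TG : Finset α) (TH : Finset β),
        IsSplit I IG IH M ∧
          IsVertexCover G TG ∧ fullSet labG TG = IG ∧
          IsVertexCover H TH ∧ fullSet labH TH = IH ∧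
          n = TG.card + TH.card} := by
  ext n
  simp only [Set.mem_setOf_eq]
  constructor
  · rintro ⟨T, hcov, hfull, rfl⟩
    refine ⟨fullSet labG (leftPart T), fullSet labH (rightPart T), leftPart T, rightPart T,
      ⟨?_, ?_⟩, ?_, rfl, ?_, rfl, ?_⟩
    · ext i
      rw [← hfull]
      simp only [Finset.mem_inter, fullSet, labelClass, leftPart, rightPart,
        Finset.mem_filter, Finset.mem_univ, true_and, Finset.subset_iff]
      constructor
      · rintro ⟨h1, h2⟩ x hx
        cases x with
        | inl a => exact h1 (by simpa using hx)
        | inr b => exact h2 (by simpa using hx)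
      · intro h
        exact ⟨fun a ha => by
            simpa using h (x := Sum.inl a) (by simpa using ha),
          fun b hb => by
            simpa using h (x := Sum.inr b) (by simpa using hb)⟩
    · intro p hp
      by_contra hco
      push_neg at hco
      obtain ⟨h1, h2⟩ := hco
      simp only [fullSet, labelClass, leftPart, rightPart, Finset.mem_filter,
        Finset.mem_univ, true_and, Finset.subset_iff, not_forall] at h1 h2
      obtain ⟨a, ha, haT⟩ := h1
      obtain ⟨b, hb, hbT⟩ := h2
      have hadj : (MProduct G H labG labH M).Adj (Sum.inl a) (Sum.inr b) := by
        show (labG a, labH b) ∈ M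
        rw [ha, hb]
        exact hp
      rcases hcov hadj with h | h
      · exact haT h
      · exact hbT h
    · intro u v huv
      have : (MProduct G H labG labH M).Adj (Sum.inl u) (Sum.inl v) := huv
      rcases hcov this with h | h
      · exact Or.inl (by simp [leftPart, h])
      · exact Or.inr (by simp [leftPart, h])
    · intro u v huv
      have : (MProduct G H labG labH M).Adj (Sum.inr u) (Sum.inr v) := huv
      rcases hcov this with h | h
      · exact Or.inl (by simp [rightPart, h])
      · exact Or.inr (by simp [rightPart, h])
    · have hdecomp : T = (leftPart T).image Sum.inl ∪ (rightPart T).image Sum.inr := by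
        ext x
        cases x <;> simp [leftPart, rightPart]
      have hdis : Disjoint ((leftPart T).image Sum.inl) ((rightPart T).image Sum.inr) := by
        rw [Finset.disjoint_left]
        rintro x hx hy
        simp only [Finset.mem_image] at hx hy
        obtain ⟨a, -, rfl⟩ := hx
        obtain ⟨b, -, hb⟩ := hy
        exact absurd hb (by simp)
      conv_lhs => rw [hdecomp]
      rw [Finset.card_union_of_disjoint hdis, Finset.card_image_of_injective _ Sum.inl_injective,
        Finset.card_image_of_injective _ Sum.inr_injective]
  · rintro ⟨IG, IH, TG, TH, ⟨hsplit, hM⟩, hcovG, rfl, hcovH, rfl, rfl⟩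
    refine ⟨TG.image Sum.inl ∪ TH.image Sum.inr, ?_, ?_, ?_⟩
    · rintro (u | u) (v | v) hadj
      · rcases hcovG hadj with h | h
        · exact Or.inl (by simp [h])
        · exact Or.inr (by simp [h])
      · -- inl u, inr v : (labG u, labH v) ∈ M
        have hm : (labG u, labH v) ∈ M := hadj
        rcases hM _ hm with h | h
        · simp only [fullSet, labelClass, Finset.mem_filter, Finset.mem_univ, true_and] at h
          have : u ∈ TG := (Finset.mem_filter.mp h).2 (by simp)
          exact Or.inl (by simp [this])
        · simp only [fullSet, labelClass, Finset.mem_filter, Finset.mem_univ, true_and] at h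
          have : v ∈ TH := (Finset.mem_filter.mp h).2 (by simp)
          exact Or.inr (by simp [this])
      · have hm : (labG v, labH u) ∈ M := hadj
        rcases hM _ hm with h | h
        · simp only [fullSet, labelClass, Finset.mem_filter, Finset.mem_univ, true_and] at h
          have : v ∈ TG := (Finset.mem_filter.mp h).2 (by simp)
          exact Or.inr (by simp [this])
        · simp only [fullSet, labelClass, Finset.mem_filter, Finset.mem_univ, true_and] at h
          have : u ∈ TH := (Finset.mem_filter.mp h).2 (by simp)
          exact Or.inl (by simp [this])
      · rcases hcovH hadj with h | h
        · exact Or.inl (by simp [h])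
        · exact Or.inr (by simp [h])
    · rw [← hsplit]
      ext i
      simp only [Finset.mem_inter, fullSet, labelClass, Finset.mem_filter,
        Finset.mem_univ, true_and, Finset.subset_iff]
      constructor
      · intro h
        constructor
        · intro a ha
          have := h (x := Sum.inl a) (by simpa using ha)
          simpa using this
        · intro b hb
          have := h (x := Sum.inr b) (by simpa using hb)
          simpa using this
      · rintro ⟨h1, h2⟩ x hx
        cases x with
        | inl a =>
          have : a ∈ TG := h1 (by simpa using hx)
          simp [this]
        | inr b =>
          have : b ∈ TH := h2 (by simpa using hx)
          simp [this]
    · have hdis : Disjoint (TG.image Sum.inl) (TH.image Sum.inr) := by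
        rw [Finset.disjoint_left]
        rintro x hx hy
        simp only [Finset.mem_image] at hx hy
        obtain ⟨a, -, rfl⟩ := hx
        obtain ⟨b, -, hb⟩ := hy
        exact absurd hb (by simp)
      rw [Finset.card_union_of_disjoint hdis, Finset.card_image_of_injective _ Sum.inl_injective,
        Finset.card_image_of_injective _ Sum.inr_injective]
end

section
/- Let k be a positive integer, α and β finite types, G a simple graph on α with labeling lab_G : α → Fin k, H a simple graph on β with labeling lab_H : β → Fin k, and M ⊆ Fin k × Fin k. Let F be the M-product of (G, lab_G) and (H, lab_H), labeled by lab_G on inl-vertices and lab_H on inr-vertices. Let I ⊆ Fin k and let T be a vertex cover of F with full_F(T) = I; put T_G = {a : inl a ∈ T}, T_H = {b : inr b ∈ T}, I_G = full_G(T_G), I_H = full_H(T_H). Then T is a minimum vertex cover of F with respect to I if and only if T_G is a minimum vertex cover of G with respect to I_G, T_H is a minimum vertex cover of H with respect to I_H, and μ_G(I_G) + μ_H(I_H) = μ_F(I), where μ_K(J) denotes the minimum cardinality of a vertex cover of K with full set J. -/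
/-- `X` is a minimum vertex cover of `K` with respect to `J`: a vertex cover with full
set `J`, of minimum cardinality among all vertex covers of `K` with full set `J`. -/
def IsMinVertexCoverWrt {k : ℕ} {γ : Type*} [Fintype γ] [DecidableEq γ]
    (K : SimpleGraph γ) (lab : γ → Fin k) (J : Finset (Fin k)) (X : Finset γ) : Prop :=
  IsVertexCover K X ∧ fullSet lab X = J ∧
    ∀ Y : Finset γ, IsVertexCover K Y → fullSet lab Y = J → X.card ≤ Y.card

/-- `μ_K(J)`: the minimum cardinality of a vertex cover of `K` with full set `J`. -/
noncomputable def mu {k : ℕ} {γ : Type*} [Fintype γ] [DecidableEq γ]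
    (K : SimpleGraph γ) (lab : γ → Fin k) (J : Finset (Fin k)) : ℕ :=
  sInf {n : ℕ | ∃ X : Finset γ, IsVertexCover K X ∧ fullSet lab X = J ∧ X.card = n}

section Aux

variable {k : ℕ} {α β : Type*} [Fintype α] [Fintype β] [DecidableEq α] [DecidableEq β]

/-- Combine a set of left vertices and a set of right vertices. -/
def combineVC (A : Finset α) (B : Finset β) : Finset (α ⊕ β) :=
  A.map ⟨Sum.inl, Sum.inl_injective⟩ ∪ B.map ⟨Sum.inr, Sum.inr_injective⟩

lemma mem_combineVC_inl {A : Finset α} {B : Finset β} {a : α} :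
    Sum.inl a ∈ combineVC A B ↔ a ∈ A := by
  simp [combineVC]

lemma mem_combineVC_inr {A : Finset α} {B : Finset β} {b : β} :
    Sum.inr b ∈ combineVC A B ↔ b ∈ B := by
  simp [combineVC]

lemma combineVC_card (A : Finset α) (B : Finset β) :
    (combineVC A B).card = A.card + B.card := by
  rw [combineVC, Finset.card_union_of_disjoint, Finset.card_map, Finset.card_map]
  simp [Finset.disjoint_left]

lemma combineVC_left_right (T : Finset (α ⊕ β)) :
    combineVC (leftPart T) (rightPart T) = T := by
  ext x
  cases x with
  | inl a => simp [mem_combineVC_inl, leftPart]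
  | inr b => simp [mem_combineVC_inr, rightPart]

lemma mem_fullSet {γ : Type*} [Fintype γ] [DecidableEq γ] (lab : γ → Fin k)
    (X : Finset γ) (i : Fin k) :
    i ∈ fullSet lab X ↔ ∀ v, lab v = i → v ∈ X := by
  simp [fullSet, labelClass, Finset.subset_iff]

lemma full_combineVC (labG : α → Fin k) (labH : β → Fin k) (A : Finset α)
    (B : Finset β) :
    fullSet (Sum.elim labG labH) (combineVC A B) = fullSet labG A ∩ fullSet labH B := by
  ext i
  simp only [Finset.mem_inter, mem_fullSet]
  constructor
  · intro h
    exact ⟨fun a ha => mem_combineVC_inl.mp (h (Sum.inl a) ha),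
           fun b hb => mem_combineVC_inr.mp (h (Sum.inr b) hb)⟩
  · rintro ⟨h1, h2⟩ (a | b) hv
    · exact mem_combineVC_inl.mpr (h1 a hv)
    · exact mem_combineVC_inr.mpr (h2 b hv)

lemma cover_combineVC (G : SimpleGraph α) (H : SimpleGraph β) (labG : α → Fin k)
    (labH : β → Fin k) (M : Set (Fin k × Fin k)) (A : Finset α) (B : Finset β) :
    IsVertexCover (MProduct G H labG labH M) (combineVC A B) ↔
      IsVertexCover G A ∧ IsVertexCover H B ∧
        ∀ i j, (i, j) ∈ M → i ∈ fullSet labG A ∨ j ∈ fullSet labH B := by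
  constructor
  · intro h
    refine ⟨fun u v huv => ?_, fun u v huv => ?_, fun i j hij => ?_⟩
    · have := h (show (MProduct G H labG labH M).Adj (Sum.inl u) (Sum.inl v) from huv)
      simpa [mem_combineVC_inl] using this
    · have := h (show (MProduct G H labG labH M).Adj (Sum.inr u) (Sum.inr v) from huv)
      simpa [mem_combineVC_inr] using this
    · by_contra hc
      push_neg at hc
      obtain ⟨h1, h2⟩ := hc
      rw [mem_fullSet] at h1 h2
      push_neg at h1 h2
      obtain ⟨u, hu1, hu2⟩ := h1
      obtain ⟨v, hv1, hv2⟩ := h2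
      have : (MProduct G H labG labH M).Adj (Sum.inl u) (Sum.inr v) := by
        show (labG u, labH v) ∈ M
        rw [hu1, hv1]; exact hij
      rcases h this with h' | h'
      · exact hu2 (mem_combineVC_inl.mp h')
      · exact hv2 (mem_combineVC_inr.mp h')
  · rintro ⟨hA, hB, hM⟩ (u | u) (v | v) hadj
    · rcases hA hadj with h | h
      · exact Or.inl (mem_combineVC_inl.mpr h)
      · exact Or.inr (mem_combineVC_inl.mpr h)
    · rcases hM (labG u) (labH v) hadj with h | h
      · exact Or.inl (mem_combineVC_inl.mpr ((mem_fullSet _ _ _).mp h u rfl))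
      · exact Or.inr (mem_combineVC_inr.mpr ((mem_fullSet _ _ _).mp h v rfl))
    · rcases hM (labG v) (labH u) hadj with h | h
      · exact Or.inr (mem_combineVC_inl.mpr ((mem_fullSet _ _ _).mp h v rfl))
      · exact Or.inl (mem_combineVC_inr.mpr ((mem_fullSet _ _ _).mp h u rfl))
    · rcases hB hadj with h | h
      · exact Or.inl (mem_combineVC_inr.mpr h)
      · exact Or.inr (mem_combineVC_inr.mpr h)

/-- `mu` equals the cardinality of any minimum vertex cover. -/
lemma mu_eq_of_min {γ : Type*} [Fintype γ] [DecidableEq γ] (K : SimpleGraph γ)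
    (lab : γ → Fin k) (J : Finset (Fin k)) (X : Finset γ)
    (hX : IsMinVertexCoverWrt K lab J X) : mu K lab J = X.card := by
  obtain ⟨h1, h2, h3⟩ := hX
  apply le_antisymm
  · exact Nat.sInf_le ⟨X, h1, h2, rfl⟩
  · obtain ⟨Y, hY1, hY2, hY3⟩ :=
      Nat.sInf_mem (⟨X.card, X, h1, h2, rfl⟩ :
        {n : ℕ | ∃ Z : Finset γ, IsVertexCover K Z ∧ fullSet lab Z = J ∧ Z.card = n}.Nonempty)
    rw [mu, ← hY3]
    exact h3 Y hY1 hY2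

end Aux

/-- Let `F` be the `M`-product of `(G, labG)` and `(H, labH)`, labeled by
`Sum.elim labG labH`, and let `T` be a vertex cover of `F` with `full_F(T) = I`. Then
`T` is a minimum vertex cover of `F` with respect to `I` iff `T_G` is a minimum vertex
cover of `G` with respect to `I_G = full_G(T_G)`, `T_H` is a minimum vertex cover of
`H` with respect to `I_H = full_H(T_H)`, and `μ_G(I_G) + μ_H(I_H) = μ_F(I)`. -/
theorem stmt16 (k : ℕ) (hk : 0 < k) {α β : Type*}
    [Fintype α] [Fintype β] [DecidableEq α] [DecidableEq β]
    (G : SimpleGraph α) (H : SimpleGraph β)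
    (labG : α → Fin k) (labH : β → Fin k) (M : Set (Fin k × Fin k))
    (I : Finset (Fin k)) (T : Finset (α ⊕ β))
    (hT : IsVertexCover (MProduct G H labG labH M) T)
    (hfull : fullSet (Sum.elim labG labH) T = I) :
    IsMinVertexCoverWrt (MProduct G H labG labH M) (Sum.elim labG labH) I T ↔
      (IsMinVertexCoverWrt G labG (fullSet labG (leftPart T)) (leftPart T) ∧
       IsMinVertexCoverWrt H labH (fullSet labH (rightPart T)) (rightPart T) ∧
       mu G labG (fullSet labG (leftPart T)) + mu H labH (fullSet labH (rightPart T)) =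
         mu (MProduct G H labG labH M) (Sum.elim labG labH) I) := by
  set TG := leftPart T with hTG
  set TH := rightPart T with hTH
  have hcomb : combineVC TG TH = T := combineVC_left_right T
  have hcard : T.card = TG.card + TH.card := by
    rw [← hcomb, combineVC_card]
  have hcover := (cover_combineVC G H labG labH M TG TH).mp (hcomb ▸ hT)
  obtain ⟨hG, hH, hM⟩ := hcover
  have hI : fullSet labG TG ∩ fullSet labH TH = I := by
    rw [← full_combineVC, hcomb, hfull]
  constructor
  · intro hmin
    have hmuF : mu (MProduct G H labG labH M) (Sum.elim labG labH) I = T.card :=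
      mu_eq_of_min _ _ _ _ hmin
    have hminG : IsMinVertexCoverWrt G labG (fullSet labG TG) TG := by
      refine ⟨hG, rfl, fun Y hY hYfull => ?_⟩
      have hcov : IsVertexCover (MProduct G H labG labH M) (combineVC Y TH) := by
        rw [cover_combineVC]
        exact ⟨hY, hH, by rw [hYfull]; exact hM⟩
      have hfl : fullSet (Sum.elim labG labH) (combineVC Y TH) = I := by
        rw [full_combineVC, hYfull, hI]
      have := hmin.2.2 _ hcov hfl
      rw [combineVC_card, hcard] at this
      omega
    have hminH : IsMinVertexCoverWrt H labH (fullSet labH TH) TH := by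
      refine ⟨hH, rfl, fun Y hY hYfull => ?_⟩
      have hcov : IsVertexCover (MProduct G H labG labH M) (combineVC TG Y) := by
        rw [cover_combineVC]
        exact ⟨hG, hY, by rw [hYfull]; exact hM⟩
      have hfl : fullSet (Sum.elim labG labH) (combineVC TG Y) = I := by
        rw [full_combineVC, hYfull, hI]
      have := hmin.2.2 _ hcov hfl
      rw [combineVC_card, hcard] at this
      omega
    refine ⟨hminG, hminH, ?_⟩
    rw [mu_eq_of_min _ _ _ _ hminG, mu_eq_of_min _ _ _ _ hminH, hmuF, hcard]
  · rintro ⟨hminG, hminH, hsum⟩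
    refine ⟨hT, hfull, fun Y hY hYfull => ?_⟩
    have : mu (MProduct G H labG labH M) (Sum.elim labG labH) I ≤ Y.card :=
      Nat.sInf_le ⟨Y, hY, hYfull, rfl⟩
    calc T.card = TG.card + TH.card := hcard
      _ = mu G labG (fullSet labG TG) + mu H labH (fullSet labH TH) := by
          rw [mu_eq_of_min _ _ _ _ hminG, mu_eq_of_min _ _ _ _ hminH]
      _ = mu (MProduct G H labG labH M) (Sum.elim labG labH) I := hsum
      _ ≤ Y.card := this
end
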